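/- For every integer k ≥ 3, the satellite graph S_{2k+1} has the following properties: it is connected; it is not bipartite; it is not regular; its diameter is 2; every vertex lies on a triangle; for every vertex u, each vertex in the neighbourhood of u forms a triangle together with u; it is a core graph; and 0 is a main eigenvalue of its adjacency matrix (there is a kernel vector not orthogonal to the all-ones vector). -/

import Mathlib

/-- Vertices of the satellite graph: the dominating vertex `d = Sum.inl ()`,
the cycle vertices `u i = Sum.inr (Sum.inl i)` and the pendant-type vertices
`w i = Sum.inr (Sum.inr i)`. -/
abbrev SatV (k : ℕ) := Unit ⊕ Fin k ⊕ Fin k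

/-- Generating relation for the satellite graph `S_{2k+1}`: `d` is adjacent to every other
vertex, `u_1, …, u_k` form a cycle, and `u_i` is adjacent to `w_i`. -/
def satRel (k : ℕ) : SatV k → SatV k → Prop
  | Sum.inl _, _ => True
  | Sum.inr (Sum.inl i), Sum.inr (Sum.inl j) => (j : ℕ) = ((i : ℕ) + 1) % k
  | Sum.inr (Sum.inl i), Sum.inr (Sum.inr j) => i = j
  | _, _ => False

/-- The satellite graph `S_{2k+1}` on `2k+1` vertices. -/
def satGraph (k : ℕ) : SimpleGraph (SatV k) := SimpleGraph.fromRel (satRel k)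

noncomputable instance (k : ℕ) : DecidableRel (satGraph k).Adj := Classical.decRel _


/-!
The hub `d` is a universal vertex, and `S_{2k+1}` is not complete since `w_0, w_1` are not
adjacent. A non-complete graph with a universal vertex is connected, has diameter exactly `2`
and cannot be regular (regularity would make every vertex universal). Every edge has a common
neighbour: `d` if neither end is `d`, and otherwise the partner `u_i ↔ w_i` of the other end;
this puts every vertex on a triangle, which rules out 2-colourings. Finally, the vector that is
`-1` on the cycle and `1` elsewhere lies in the kernel and vanishes nowhere, with coordinate
sum `1`: at `d` the `k` cycle and `k` outer entries cancel, at `u_i` the two cycle neighbours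
cancel `d` and `w_i`, and at `w_i` the entry of `u_i` cancels that of `d`.
-/

namespace SimpleGraph

variable {V : Type*} {G : SimpleGraph V} {c : V}

lemma IsUniversal.ediam_le_two (hc : G.IsUniversal c) : G.ediam ≤ 2 :=
  calc G.ediam ≤ 2 * G.eccent c := G.ediam_le_two_mul_eccent c
    _ ≤ 2 * 1 := by gcongr; exact (G.eccent_le_one_iff c).2 hc
    _ = 2 := mul_one 2

lemma IsUniversal.ediam_eq_two (hc : G.IsUniversal c) (hG : G ≠ ⊤) : G.ediam = 2 := by
  obtain ⟨a, b, hab, -⟩ := ne_top_iff_exists_not_adj.1 hG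
  have : Nontrivial V := ⟨⟨a, b, hab⟩⟩
  have h1 : 1 < G.ediam := lt_of_le_of_ne
    (Order.one_le_iff_pos.2 (pos_iff_ne_zero.2 ediam_ne_zero)) (Ne.symm (mt ediam_eq_one.1 hG))
  exact le_antisymm hc.ediam_le_two (Order.add_one_le_of_lt h1)

lemma IsUniversal.diam_eq_two (hc : G.IsUniversal c) (hG : G ≠ ⊤) : G.diam = 2 := by
  rw [diam, hc.ediam_eq_two hG]
  rfl

lemma IsUniversal.not_isRegularOfDegree [Fintype V] [DecidableRel G.Adj]
    (hc : G.IsUniversal c) (hG : G ≠ ⊤) (r : ℕ) : ¬G.IsRegularOfDegree r := by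
  intro hr
  refine hG (eq_top_iff_forall_isUniversal.2 fun v ↦ ?_)
  rw [← degree_eq_card_sub_one, hr v, ← hr c, degree_eq_card_sub_one]
  exact hc

lemma IsUniversal.exists_adj_adj_of_adj (hc : G.IsUniversal c)
    (hne : ∀ v, v ≠ c → ∃ a, a ≠ c ∧ G.Adj v a) {a b : V} (hab : G.Adj a b) :
    ∃ x, G.Adj a x ∧ G.Adj b x := by
  by_cases ha : a = c
  · subst ha
    obtain ⟨x, hx, hbx⟩ := hne b hab.ne.symm
    exact ⟨x, hc (Ne.symm hx), hbx⟩
  by_cases hb : b = c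
  · subst hb
    obtain ⟨x, hx, hax⟩ := hne a hab.ne
    exact ⟨x, hax, hc (Ne.symm hx)⟩
  exact ⟨c, (hc (Ne.symm ha)).symm, (hc (Ne.symm hb)).symm⟩

lemma IsUniversal.exists_triangle [Nontrivial V] (hc : G.IsUniversal c)
    (hne : ∀ v, v ≠ c → ∃ a, a ≠ c ∧ G.Adj v a) (v : V) :
    ∃ a b, G.Adj v a ∧ G.Adj v b ∧ G.Adj a b := by
  obtain ⟨a, hva⟩ : ∃ a, G.Adj v a := by
    simpa [IsIsolated] using hc.not_isIsolated v
  obtain ⟨b, hvb, hab⟩ := hc.exists_adj_adj_of_adj hne hva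
  exact ⟨a, b, hva, hvb, hab⟩

lemma not_colorable_two_of_adj {a b c : V} (hab : G.Adj a b) (hac : G.Adj a c)
    (hbc : G.Adj b c) : ¬G.Colorable 2 := by
  classical
  exact fun h ↦ h.cliqueFree (by norm_num) {a, b, c} (is3Clique_triple_iff.2 ⟨hab, hac, hbc⟩)

end SimpleGraph

namespace Fin

variable {n : ℕ} [NeZero n]

lemma add_one_ne_self (hn : 2 ≤ n) (i : Fin n) : i + 1 ≠ i := by
  simpa [Fin.ext_iff, Fin.val_one', Nat.one_mod_eq_one] using (by omega : n ≠ 1)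

lemma add_one_ne_sub_one (hn : 3 ≤ n) (i : Fin n) : i + 1 ≠ i - 1 := by
  intro h
  have h2 : (1 : Fin n) + 1 = 0 :=
    calc (1 : Fin n) + 1 = (i + 1) - (i - 1) := by abel
      _ = 0 := by rw [h, sub_self]
  simp [Fin.ext_iff, Fin.val_add, Nat.one_mod_eq_one.2 (by omega : n ≠ 1),
    Nat.mod_eq_of_lt (by omega : 2 < n)] at h2

end Fin

namespace satGraph

variable {k : ℕ}

abbrev d : SatV k := Sum.inl ()
abbrev u (i : Fin k) : SatV k := Sum.inr (Sum.inl i)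
abbrev w (i : Fin k) : SatV k := Sum.inr (Sum.inr i)

lemma isUniversal_d : (satGraph k).IsUniversal d :=
  fun _ hv ↦ ⟨hv, Or.inl trivial⟩

lemma adj_u_w_iff (i j : Fin k) : (satGraph k).Adj (u i) (w j) ↔ i = j := by
  simp [satGraph, satRel]

lemma not_adj_w_w (i j : Fin k) : ¬(satGraph k).Adj (w i) (w j) := by
  simp [satGraph, satRel]

lemma exists_adj_ne_d : ∀ v : SatV k, v ≠ d → ∃ a, a ≠ d ∧ (satGraph k).Adj v a
  | Sum.inl (), h => absurd rfl h
  | Sum.inr (Sum.inl i), _ => ⟨w i, by simp, (adj_u_w_iff i i).2 rfl⟩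
  | Sum.inr (Sum.inr i), _ => ⟨u i, by simp, ((adj_u_w_iff i i).2 rfl).symm⟩

lemma ne_top (hk : 2 ≤ k) : satGraph k ≠ ⊤ :=
  SimpleGraph.ne_top_iff_exists_not_adj.2
    ⟨w ⟨0, by omega⟩, w ⟨1, by omega⟩, by simp, not_adj_w_w _ _⟩

section Cycle

variable [NeZero k]

lemma satRel_u_u_iff (i j : Fin k) : satRel k (u i) (u j) ↔ j = i + 1 := by
  rw [satRel, Fin.ext_iff, Fin.val_add, Fin.val_one', Nat.add_mod_mod]

lemma adj_u_u_iff (hk : 3 ≤ k) (i j : Fin k) :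
    (satGraph k).Adj (u i) (u j) ↔ j = i + 1 ∨ j = i - 1 := by
  rw [satGraph, SimpleGraph.fromRel_adj, satRel_u_u_iff, satRel_u_u_iff, eq_sub_iff_add_eq,
    eq_comm (b := j + 1), and_iff_right_iff_imp]
  have hk2 : 2 ≤ k := by omega
  rintro (rfl | rfl)
  · simpa using (Fin.add_one_ne_self hk2 i).symm
  · simpa using Fin.add_one_ne_self hk2 j

lemma neighborFinset_u (hk : 3 ≤ k) (i : Fin k) :
    (satGraph k).neighborFinset (u i) = {d, w i, u (i + 1), u (i - 1)} := by
  ext (_ | j | j)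
  · simpa using (isUniversal_d (by simp : d ≠ u i)).symm
  · simp [adj_u_u_iff hk]
  · simp [adj_u_w_iff, eq_comm]

end Cycle

lemma neighborFinset_w (i : Fin k) : (satGraph k).neighborFinset (w i) = {d, u i} := by
  ext (_ | j | j)
  · simpa using (isUniversal_d (by simp : d ≠ w i)).symm
  · simp [SimpleGraph.adj_comm, adj_u_w_iff]
  · simpa using not_adj_w_w i j

def kernelVec (k : ℕ) : SatV k → ℝ := Sum.elim 1 (Sum.elim (-1) 1)

lemma kernelVec_ne_zero : ∀ v : SatV k, kernelVec k v ≠ 0 := by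
  rintro (_ | _ | _) <;> simp [kernelVec]

lemma sum_kernelVec : ∑ v, kernelVec k v = 1 := by
  simp [kernelVec, Fintype.sum_sum_type]

lemma adjMatrix_mulVec_kernelVec (hk : 3 ≤ k) :
    ((satGraph k).adjMatrix ℝ).mulVec (kernelVec k) = 0 := by
  have : NeZero k := ⟨by omega⟩
  ext (_ | i | i)
  · rw [SimpleGraph.adjMatrix_mulVec_apply,
      ((satGraph k).neighborFinset_eq_erase_univ d).2 isUniversal_d,
      Finset.sum_erase_eq_sub (Finset.mem_univ _), sum_kernelVec]
    simp [kernelVec]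
  · rw [SimpleGraph.adjMatrix_mulVec_apply, neighborFinset_u hk,
      Finset.sum_insert (by simp), Finset.sum_insert (by simp),
      Finset.sum_pair (by simpa using Fin.add_one_ne_sub_one hk i)]
    simp [kernelVec]
  · rw [SimpleGraph.adjMatrix_mulVec_apply, neighborFinset_w, Finset.sum_pair (by simp)]
    simp [kernelVec]

end satGraph

open satGraph in
theorem satGraph_mem_C (k : ℕ) (hk : 3 ≤ k) :
    (satGraph k).Connected ∧
    ¬ (satGraph k).Colorable 2 ∧
    (¬ ∃ d, (satGraph k).IsRegularOfDegree d) ∧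
    (satGraph k).diam = 2 ∧
    (∀ v, ∃ a b, (satGraph k).Adj v a ∧ (satGraph k).Adj v b ∧ (satGraph k).Adj a b) ∧
    (∀ u v, (satGraph k).Adj u v → ∃ w, (satGraph k).Adj u w ∧ (satGraph k).Adj v w) ∧
    (∀ v, ∃ x : SatV k → ℝ, ((satGraph k).adjMatrix ℝ).mulVec x = 0 ∧ x v ≠ 0) ∧
    (∃ x : SatV k → ℝ, ((satGraph k).adjMatrix ℝ).mulVec x = 0 ∧ ∑ v, x v ≠ 0) := by
  have hc : (satGraph k).IsUniversal d := isUniversal_d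
  have hG : satGraph k ≠ ⊤ := ne_top (by omega)
  have : Nontrivial (SatV k) := ⟨⟨d, w ⟨0, by omega⟩, by simp⟩⟩
  have htri := hc.exists_triangle exists_adj_ne_d
  obtain ⟨a, b, hda, hdb, hab⟩ := htri d
  exact ⟨.of_isUniversal hc, SimpleGraph.not_colorable_two_of_adj hda hdb hab,
    fun ⟨r, hr⟩ ↦ hc.not_isRegularOfDegree hG r hr, hc.diam_eq_two hG, htri,
    fun _ _ ↦ hc.exists_adj_adj_of_adj exists_adj_ne_d,
    fun v ↦ ⟨kernelVec k, adjMatrix_mulVec_kernelVec hk, kernelVec_ne_zero v⟩,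
    ⟨kernelVec k, adjMatrix_mulVec_kernelVec hk, sum_kernelVec.trans_ne one_ne_zero⟩⟩
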